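/- For every p ≥ 1 there exists a constant c_p such that for all x, y ∈ 𝕋² with x ≠ y, the quantity ∑_{k ∈ ℤ²\{0}} |k|^{-4} min(1, |k·(x−y)|²) is bounded by c |x−y|² log(8π |x−y|^{-1}). -/

import Mathlib

open scoped ENNReal Real

/-- Euclidean norm of a lattice point in `ℤ²`. -/
noncomputable def latNorm (m : ℤ × ℤ) : ℝ :=
  Real.sqrt ((m.1 : ℝ)^2 + (m.2 : ℝ)^2)

/-!
Write `h = x - y` and `t = ‖h‖`. Since `|k·h| ≤ 2 t |k|`, interpolating
`min 1 u ≤ u ^ (1 - δ/2)` bounds the `k`-th term by `(2t)^(2-δ) |k|^(-(2+δ))`. Counting lattice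
points on the sup-norm shells (`8n` of them at distance `n`) and comparing with `ζ(1 + δ)` gives
`∑_{k ≠ 0} |k|^(-(2+δ)) ≤ 8 (1 + 1/δ)`. The choice `δ = 1 / log (8π/t)` makes `(2t)^(-δ) ≤ e`
while `1/δ` is the logarithm.
-/

open Real Finset

lemma tsum_one_div_nat_add_one_rpow_le {s : ℝ} (hs : 1 < s) :
    ∑' n : ℕ, 1 / ((n : ℝ) + 1) ^ s ≤ s / (s - 1) := by
  -- `termTSum s = 1 / (s - 1) - ζ(s) / s` is a sum of nonnegative integrals.
  have hterm : 0 ≤ ZetaAsymptotics.termTSum s :=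
    tsum_nonneg fun n ↦ ZetaAsymptotics.term_nonneg (n + 1) s
  rw [ZetaAsymptotics.termTSum_of_lt hs, sub_nonneg, one_div_mul_eq_div,
    div_le_div_iff₀ (by linarith) (by linarith)] at hterm
  rw [le_div_iff₀ (by linarith)]
  linarith

lemma ENNReal.tsum_eq_tsum_box (f : ℤ × ℤ → ℝ≥0∞) :
    ∑' k, f k = ∑' n : ℕ, ∑ k ∈ box n, f k := by
  rw [← (Set.sigmaEquiv _ Int.existsUnique_mem_box).tsum_eq, ENNReal.tsum_sigma']
  exact tsum_congr fun n ↦ Finset.tsum_subtype (box n) f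

lemma ENNReal.tsum_ne_zero_eq_tsum_box (f : ℤ × ℤ → ℝ≥0∞) :
    ∑' k : {k : ℤ × ℤ // k ≠ 0}, f k = ∑' n : ℕ, ∑ k ∈ box (n + 1), f k := by
  refine (tsum_subtype {k : ℤ × ℤ | k ≠ 0} f).trans ?_
  rw [ENNReal.tsum_eq_tsum_box, tsum_eq_zero_add' ENNReal.summable, box_zero, sum_singleton,
    Set.indicator_of_notMem (by simp), zero_add]
  refine tsum_congr fun n ↦ sum_congr rfl fun k hk ↦ Set.indicator_of_mem ?_ f
  rintro rfl
  simp at hk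

lemma latNorm_nonneg (k : ℤ × ℤ) : 0 ≤ latNorm k := Real.sqrt_nonneg _

lemma abs_le_latNorm_fst (k : ℤ × ℤ) : |(k.1 : ℝ)| ≤ latNorm k :=
  Real.abs_le_sqrt (le_add_of_nonneg_right (sq_nonneg _))

lemma abs_le_latNorm_snd (k : ℤ × ℤ) : |(k.2 : ℝ)| ≤ latNorm k :=
  Real.abs_le_sqrt (le_add_of_nonneg_left (sq_nonneg _))

lemma norm_le_latNorm (k : ℤ × ℤ) : ‖k‖ ≤ latNorm k := by
  rw [Prod.norm_def, Int.norm_eq_abs, Int.norm_eq_abs]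
  exact max_le (abs_le_latNorm_fst k) (abs_le_latNorm_snd k)

lemma latNorm_pos {k : ℤ × ℤ} (hk : k ≠ 0) : 0 < latNorm k :=
  (norm_pos_iff.mpr hk).trans_le (norm_le_latNorm k)

lemma Int.norm_eq_of_mem_box {n : ℕ} {k : ℤ × ℤ} (hk : k ∈ box n) : ‖k‖ = n := by
  rw [← Int.mem_box.mp hk, Prod.norm_def, Int.norm_eq_abs, Int.norm_eq_abs, Nat.cast_max,
    Nat.cast_natAbs, Nat.cast_natAbs, Int.cast_abs, Int.cast_abs]

lemma abs_lattice_inner_le (k : ℤ × ℤ) (h : ℝ × ℝ) :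
    |(k.1 : ℝ) * h.1 + (k.2 : ℝ) * h.2| ≤ 2 * ‖h‖ * latNorm k := by
  calc |(k.1 : ℝ) * h.1 + (k.2 : ℝ) * h.2|
      ≤ |(k.1 : ℝ)| * |h.1| + |(k.2 : ℝ)| * |h.2| := by
        rw [← abs_mul, ← abs_mul]; exact abs_add_le _ _
    _ ≤ latNorm k * ‖h‖ + latNorm k * ‖h‖ :=
        add_le_add
          (mul_le_mul (abs_le_latNorm_fst k) (norm_fst_le h) (abs_nonneg _) (latNorm_nonneg k))
          (mul_le_mul (abs_le_latNorm_snd k) (norm_snd_le h) (abs_nonneg _) (latNorm_nonneg k))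
    _ = 2 * ‖h‖ * latNorm k := by ring

lemma min_one_sq_le_abs_rpow {r : ℝ} (z : ℝ) (hr0 : 0 ≤ r) (hr2 : r ≤ 2) :
    min 1 (z ^ 2) ≤ |z| ^ r := by
  rcases le_total |z| 1 with hz | hz
  · calc min 1 (z ^ 2) ≤ |z| ^ (2 : ℝ) := by rw [rpow_two, sq_abs]; exact min_le_right _ _
      _ ≤ |z| ^ r := rpow_le_rpow_of_exponent_ge' (abs_nonneg z) hz hr0 hr2
  · exact (min_le_left _ _).trans (one_le_rpow hz hr0)

lemma rpow_neg_four_mul_min_one_sq_le {L a z δ : ℝ} (hL : 0 < L) (ha : 0 ≤ a)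
    (hδ0 : 0 ≤ δ) (hδ2 : δ ≤ 2) (hz : |z| ≤ a * L) :
    L ^ (-4 : ℝ) * min 1 (z ^ 2) ≤ a ^ (2 - δ) * L ^ (-(2 + δ)) := by
  have hr : 0 ≤ 2 - δ := by linarith
  calc L ^ (-4 : ℝ) * min 1 (z ^ 2) ≤ L ^ (-4 : ℝ) * (a * L) ^ (2 - δ) := by
        gcongr
        exact (min_one_sq_le_abs_rpow z hr (by linarith)).trans
          (rpow_le_rpow (abs_nonneg z) hz hr)
    _ = a ^ (2 - δ) * L ^ (-(2 + δ)) := by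
        rw [mul_rpow ha hL.le, mul_left_comm, ← rpow_add hL]
        ring_nf

lemma tsum_latNorm_rpow_neg_le {s : ℝ} (hs : 2 < s) :
    ∑' k : {k : ℤ × ℤ // k ≠ 0}, ENNReal.ofReal (latNorm k ^ (-s))
      ≤ ENNReal.ofReal (8 * ((s - 1) / (s - 2))) := by
  have hsum : Summable fun n : ℕ ↦ 1 / ((n : ℝ) + 1) ^ (s - 1) := by
    refine ((summable_one_div_nat_add_rpow 1 (s - 1)).mpr (by linarith)).congr fun n ↦ ?_
    rw [abs_of_nonneg (by positivity)]
  calc ∑' k : {k : ℤ × ℤ // k ≠ 0}, ENNReal.ofReal (latNorm k ^ (-s))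
      ≤ ∑' k : {k : ℤ × ℤ // k ≠ 0}, ENNReal.ofReal (‖(k : ℤ × ℤ)‖ ^ (-s)) := by
        refine ENNReal.tsum_le_tsum fun k ↦ ENNReal.ofReal_le_ofReal ?_
        exact rpow_le_rpow_of_nonpos (norm_pos_iff.mpr k.2) (norm_le_latNorm k) (by linarith)
    _ = ∑' n : ℕ, ENNReal.ofReal (8 * (1 / ((n : ℝ) + 1) ^ (s - 1))) := by
        rw [ENNReal.tsum_ne_zero_eq_tsum_box fun k ↦ ENNReal.ofReal (‖k‖ ^ (-s))]
        refine tsum_congr fun n ↦ ?_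
        rw [sum_congr rfl fun k hk ↦ by rw [Int.norm_eq_of_mem_box hk], sum_const,
          Int.card_box n.succ_ne_zero, nsmul_eq_mul, ← ENNReal.ofReal_natCast,
          ← ENNReal.ofReal_mul (by positivity)]
        congr 1
        push_cast
        rw [rpow_sub (by positivity), rpow_one]
        field_simp
        rw [← rpow_add (by positivity), neg_add_cancel, rpow_zero]
    _ = ENNReal.ofReal (8 * ∑' n : ℕ, 1 / ((n : ℝ) + 1) ^ (s - 1)) := by
        rw [← tsum_mul_left,
          ENNReal.ofReal_tsum_of_nonneg (fun n ↦ by positivity) (hsum.mul_left 8)]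
    _ ≤ ENNReal.ofReal (8 * ((s - 1) / (s - 2))) := by
        gcongr
        have := tsum_one_div_nat_add_one_rpow_le (s := s - 1) (by linarith)
        rwa [sub_sub, one_add_one_eq_two] at this

lemma tsum_latNorm_rpow_neg_four_mul_min_one_le (h : ℝ × ℝ) {δ : ℝ} (hδ0 : 0 < δ)
    (hδ2 : δ ≤ 2) :
    ∑' k : {k : ℤ × ℤ // k ≠ 0}, ENNReal.ofReal (latNorm k ^ (-(4:ℝ)) *
        min 1 (((k.1.1 : ℝ) * h.1 + (k.1.2 : ℝ) * h.2) ^ 2))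
      ≤ ENNReal.ofReal ((2 * ‖h‖) ^ (2 - δ) * (8 * (1 + δ⁻¹))) := by
  have hlattice := tsum_latNorm_rpow_neg_le (s := 2 + δ) (by linarith)
  rw [add_sub_cancel_left, show 2 + δ - 1 = δ + 1 by ring, add_div, div_self hδ0.ne',
    one_div] at hlattice
  calc _ ≤ ∑' k : {k : ℤ × ℤ // k ≠ 0},
        ENNReal.ofReal ((2 * ‖h‖) ^ (2 - δ)) * ENNReal.ofReal (latNorm k ^ (-(2 + δ))) := by
        refine ENNReal.tsum_le_tsum fun k ↦ ?_
        rw [← ENNReal.ofReal_mul (by positivity)]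
        exact ENNReal.ofReal_le_ofReal <| rpow_neg_four_mul_min_one_sq_le (latNorm_pos k.2)
          (by positivity) hδ0.le hδ2 (abs_lattice_inner_le k h)
    _ ≤ ENNReal.ofReal ((2 * ‖h‖) ^ (2 - δ)) * ENNReal.ofReal (8 * (1 + δ⁻¹)) := by
        rw [ENNReal.tsum_mul_left]
        gcongr
    _ = ENNReal.ofReal ((2 * ‖h‖) ^ (2 - δ) * (8 * (1 + δ⁻¹))) :=
        (ENNReal.ofReal_mul (by positivity)).symm

lemma rpow_neg_inv_log_le_exp_one {a M : ℝ} (ha : 0 < a) (haM : a⁻¹ ≤ M) (hM : 0 < log M) :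
    a ^ (-(log M)⁻¹) ≤ exp 1 := by
  rw [rpow_def_of_pos ha, exp_le_exp, mul_neg, ← neg_mul, ← log_inv, ← div_eq_mul_inv,
    div_le_one hM]
  exact log_le_log (inv_pos.mpr ha) haM

lemma one_le_log_eight_mul_pi_mul_inv {t : ℝ} (ht : 0 < t) (htπ : t ≤ 2 * π * √2) :
    1 ≤ log (8 * π * t⁻¹) := by
  have hsqrt2 : (1.4 : ℝ) < √2 := by
    rw [lt_sqrt (by norm_num)]; norm_num
  have he : exp 1 ≤ 2 * √2 := by linarith [exp_one_lt_d9]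
  rw [le_log_iff_exp_le (by positivity), ← div_eq_mul_inv, le_div_iff₀ ht]
  calc exp 1 * t ≤ 2 * √2 * (2 * π * √2) := by gcongr
    _ = 8 * π := by rw [show 2 * √2 * (2 * π * √2) = 4 * π * (√2 * √2) by ring,
          mul_self_sqrt zero_le_two]; ring

theorem covariance_increment_estimate_general :
    ∃ c : ℝ, 0 < c ∧ ∀ x y : ℝ × ℝ, x ≠ y →
      ‖x - y‖ ≤ 2 * π * Real.sqrt 2 →
      (∑' k : {k : ℤ × ℤ // k ≠ 0},
        ENNReal.ofReal (latNorm k.1 ^ (-(4:ℝ)) *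
          min 1 (((k.1.1 : ℝ) * (x.1 - y.1) + (k.1.2 : ℝ) * (x.2 - y.2)) ^ 2)))
        ≤ ENNReal.ofReal
            (c * ‖x - y‖ ^ 2 * Real.log (8 * π * ‖x - y‖⁻¹)) := by
  refine ⟨64 * exp 1, by positivity, fun x y hxy htπ ↦ ?_⟩
  set t := ‖x - y‖
  set L := log (8 * π * t⁻¹)
  have ht : 0 < t := norm_pos_iff.mpr (sub_ne_zero.mpr hxy)
  have hL : 1 ≤ L := one_le_log_eight_mul_pi_mul_inv ht htπ
  have hL_inv : L⁻¹ ≤ 1 := inv_le_one_of_one_le₀ hL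
  refine (tsum_latNorm_rpow_neg_four_mul_min_one_le (x - y) (δ := L⁻¹) (by positivity)
    (by linarith)).trans (ENNReal.ofReal_le_ofReal ?_)
  have h2t : (2 * t)⁻¹ ≤ 8 * π * t⁻¹ := by
    rw [mul_inv]; gcongr; linarith [pi_gt_three]
  have hscale : (2 * t) ^ (2 - L⁻¹) ≤ 4 * exp 1 * t ^ 2 := by
    rw [sub_eq_add_neg, rpow_add (by positivity), rpow_two]
    calc (2 * t) ^ 2 * (2 * t) ^ (-L⁻¹) ≤ (2 * t) ^ 2 * exp 1 := by
          gcongr; exact rpow_neg_inv_log_le_exp_one (by positivity) h2t (by positivity)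
      _ = 4 * exp 1 * t ^ 2 := by ring
  calc _ ≤ 4 * exp 1 * t ^ 2 * (16 * L) := by
        rw [inv_inv]
        exact mul_le_mul hscale (by linarith) (by positivity) (by positivity)
    _ = 64 * exp 1 * t ^ 2 * L := by ring

/-- Kernel estimate for the covariance of increments of the stochastic convolution:
for every `p ≥ 1` there is `c` such that for all distinct `x, y` in the torus,
`∑_{k ≠ 0} |k|^{-4} min(1, |k·(x-y)|²) ≤ c |x-y|² log(8π |x-y|⁻¹)`. -/
theorem covariance_increment_estimate (p : ℝ) (hp : 1 ≤ p) :
    ∃ c : ℝ, 0 < c ∧ ∀ x y : ℝ × ℝ, x ≠ y →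
      ‖x - y‖ ≤ 2 * π * Real.sqrt 2 →
      (∑' k : {k : ℤ × ℤ // k ≠ 0},
        ENNReal.ofReal (latNorm k.1 ^ (-(4:ℝ)) *
          min 1 (((k.1.1 : ℝ) * (x.1 - y.1) + (k.1.2 : ℝ) * (x.2 - y.2)) ^ 2)))
        ≤ ENNReal.ofReal
            (c * ‖x - y‖ ^ 2 * Real.log (8 * π * ‖x - y‖⁻¹)) :=
  covariance_increment_estimate_general
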